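/- arXiv:2301.07873 — 5 statements merged into one kernel-verified Lean document; each statement's English description precedes it below -/
import Mathlib

section
/- Corollary of Theorem B: Let d ∈ ℕ and let p_1, …, p_d be integral polynomials with p_i(0) = 0 for 1 ≤ i ≤ d. If S ⊆ ℤ is piecewise syndetic, then the set {n ∈ ℤ : there exists m ∈ ℤ such that m + p_1(n) ∈ S, m + p_2(n) ∈ S, …, m + p_d(n) ∈ S} is piecewise syndetic in ℤ. -/
/-- A subset of ℤ is thick if it contains arbitrarily long intervals of
consecutive integers. -/
def ThickZ (S : Set ℤ) : Prop :=
  ∀ L : ℕ, ∃ a : ℤ, ∀ k : ℕ, k ≤ L → a + (k : ℤ) ∈ S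

/-- A subset `S` of ℤ is piecewise syndetic if there is `N ∈ ℕ` such that
`⋃_{i=1}^{N} (S - i)` is thick. -/
def PiecewiseSyndeticZ (S : Set ℤ) : Prop :=
  ∃ N : ℕ, ThickZ {x : ℤ | ∃ i : ℕ, 1 ≤ i ∧ i ≤ N ∧ x + (i : ℤ) ∈ S}

/-- A subset of ℤ² is thick if it contains a shifted copy of every finite subset of ℤ². -/
def ThickZ2 (S : Set (ℤ × ℤ)) : Prop :=
  ∀ F : Finset (ℤ × ℤ), ∃ g : ℤ × ℤ, ∀ f ∈ F, g + f ∈ S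

/-- A subset `S` of ℤ² is piecewise syndetic if there is a finite set `F ⊆ ℤ²` such
that `⋃_{g ∈ F} (S - g)` is thick. -/
def PiecewiseSyndeticZ2 (S : Set (ℤ × ℤ)) : Prop :=
  ∃ F : Finset (ℤ × ℤ), ThickZ2 {x : ℤ × ℤ | ∃ g ∈ F, x + g ∈ S}

/-- An integral polynomial: a function ℤ → ℤ agreeing with a polynomial with
rational coefficients. -/
def IsIntPoly (p : ℤ → ℤ) : Prop :=
  ∃ q : Polynomial ℚ, ∀ n : ℤ, q.eval (n : ℚ) = (p n : ℚ)

/-!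
A piecewise syndetic `S` yields a colouring `χ : ℤ → Fin N` such that every finite window of
`v ↦ v + χ v` occurs in `S` up to translation, and by compactness the orbit closure of `χ`
contains a uniformly recurrent `ψ`. The IP polynomial van der Waerden theorem for `ψ` is proved by
PET induction: differencing the family against a member of minimal degree lowers an ordinal
weight, and colour focusing along a chain of returns closes each step. A point of the orbit
closure constant on `{p i n}` then gives `m` with `m + p i n ∈ S` for all `i`, so
`{n | ∃ m, ∀ i, m + p i n ∈ S}` meets every IP set. Such a set is syndetic, since thick sets
contain IP sets.
-/

open Filter Polynomial
open scoped Ordinal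

namespace PolyVdW

section Ultralimit

variable {ι X A : Type*} [Finite A]

theorem _root_.Ultrafilter.exists_eventually_eq_of_finite (p : Ultrafilter ι) (f : ι → A) :
    ∃ a, ∀ᶠ i in p, f i = a := by
  obtain ⟨a, ha⟩ := (p.map f).eq_pure_of_finite
  have : ({a} : Set A) ∈ p.map f := by rw [ha]; exact Ultrafilter.mem_pure.2 rfl
  exact ⟨a, Ultrafilter.mem_map.1 this⟩

/-- The pointwise limit of `w` along `p`, which exists because `A` is finite. -/
noncomputable def ulim (p : Ultrafilter ι) (w : ι → X → A) (x : X) : A :=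
  (p.exists_eventually_eq_of_finite (w · x)).choose

theorem eventually_eq_ulim (p : Ultrafilter ι) (w : ι → X → A) (x : X) :
    ∀ᶠ i in p, w i x = ulim p w x :=
  (p.exists_eventually_eq_of_finite (w · x)).choose_spec

theorem eventually_eqOn_ulim (p : Ultrafilter ι) (w : ι → X → A) (G : Finset X) :
    ∀ᶠ i in p, ∀ x ∈ G, w i x = ulim p w x :=
  (eventually_all_finset G).2 fun x _ => eventually_eq_ulim p w x

end Ultralimit

theorem eventually_hyperfilter_ge (m : ℕ) : ∀ᶠ k in (hyperfilter ℕ : Filter ℕ), m ≤ k :=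
  hyperfilter_le_cofinite (Nat.cofinite_eq_atTop ▸ eventually_ge_atTop m)

section OrbitClosure

variable {A : Type*}

def shift (a : ℤ) (z : ℤ → A) : ℤ → A := fun v => z (a + v)

def orbitClosure (χ : ℤ → A) : Set (ℤ → A) :=
  {z | ∀ W : ℕ, ∃ t : ℤ, ∀ v : ℤ, |v| ≤ W → z v = χ (t + v)}

theorem self_mem_orbitClosure (χ : ℤ → A) : χ ∈ orbitClosure χ :=
  fun _ => ⟨0, fun v _ => by rw [zero_add]⟩

theorem shift_mem_orbitClosure {χ z : ℤ → A} (hz : z ∈ orbitClosure χ) (a : ℤ) :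
    shift a z ∈ orbitClosure χ := by
  intro W
  obtain ⟨t, ht⟩ := hz (W + a.natAbs)
  refine ⟨t + a, fun v hv => ?_⟩
  rw [shift, ht _ (by rw [abs_le] at hv ⊢; omega), add_assoc]

theorem orbitClosure_subset {χ ψ : ℤ → A} (hψ : ψ ∈ orbitClosure χ) :
    orbitClosure ψ ⊆ orbitClosure χ := by
  intro z hz W
  obtain ⟨t, ht⟩ := hz W
  obtain ⟨t', ht'⟩ := hψ (W + t.natAbs)
  refine ⟨t' + t, fun v hv => ?_⟩
  rw [ht v hv, ht' _ (by rw [abs_le] at hv ⊢; omega), add_assoc]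

def HasWindow (z : ℤ → A) (P : ℤ → A) (W : ℕ) : Prop :=
  ∃ t : ℤ, ∀ v : ℤ, |v| ≤ W → z (t + v) = P v

def IsUniformlyRecurrent (ψ : ℤ → A) : Prop :=
  ∀ (c : ℤ) (W : ℕ), ∃ K : ℕ, ∀ t : ℤ, ∃ s : ℤ, |s - t| ≤ K ∧
    ∀ v : ℤ, |v| ≤ W → ψ (s + v) = ψ (c + v)

open scoped Classical in
/-- Stage `k + 1` discards, whenever this leaves something, all points containing the `k`-th
window of `χ`; windows of `χ` are enumerated by their centre and radius. -/
noncomputable def shrinkingSubshift (χ : ℤ → A) : ℕ → Set (ℤ → A)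
  | 0 => orbitClosure χ
  | k + 1 =>
    let P := Denumerable.ofNat (ℤ × ℕ) k
    let Y := {z ∈ shrinkingSubshift χ k | ¬ HasWindow z (shift P.1 χ) P.2}
    if Y.Nonempty then Y else shrinkingSubshift χ k

theorem shrinkingSubshift_succ_subset (χ : ℤ → A) (k : ℕ) :
    shrinkingSubshift χ (k + 1) ⊆ shrinkingSubshift χ k := by
  rw [shrinkingSubshift]
  split_ifs
  exacts [Set.sep_subset _ _, subset_rfl]

theorem antitone_shrinkingSubshift (χ : ℤ → A) : Antitone (shrinkingSubshift χ) :=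
  antitone_nat_of_succ_le (shrinkingSubshift_succ_subset χ)

theorem shrinkingSubshift_nonempty (χ : ℤ → A) (k : ℕ) : (shrinkingSubshift χ k).Nonempty := by
  induction k with
  | zero => exact ⟨χ, self_mem_orbitClosure χ⟩
  | succ k ih =>
    rw [shrinkingSubshift]
    split_ifs with h
    exacts [h, ih]

theorem forall_hasWindow_of_mem_shrinkingSubshift {χ ψ : ℤ → A} {k : ℕ}
    (hψ : ψ ∈ shrinkingSubshift χ (k + 1))
    (hwin : HasWindow ψ (shift (Denumerable.ofNat (ℤ × ℕ) k).1 χ) (Denumerable.ofNat (ℤ × ℕ) k).2) :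
    ∀ z ∈ shrinkingSubshift χ k,
      HasWindow z (shift (Denumerable.ofNat (ℤ × ℕ) k).1 χ) (Denumerable.ofNat (ℤ × ℕ) k).2 := by
  rw [shrinkingSubshift] at hψ
  by_contra! h
  split_ifs at hψ with hY
  exacts [hψ.2 hwin, hY h]

variable [Finite A]

theorem ulim_mem_orbitClosure {ι : Type*} {p : Ultrafilter ι} {w : ι → ℤ → A}
    {χ : ℤ → A} (hw : ∀ᶠ i in p, w i ∈ orbitClosure χ) : ulim p w ∈ orbitClosure χ := by
  intro W
  obtain ⟨i, hi, hagree⟩ := (hw.and (eventually_eqOn_ulim p w (Finset.Icc (-W : ℤ) W))).exists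
  obtain ⟨t, ht⟩ := hi W
  refine ⟨t, fun v hv => ?_⟩
  rw [← hagree v (Finset.mem_Icc.2 (abs_le.1 hv)), ht v hv]

/-- Closed, shift-invariant sets; closedness in the product topology is phrased through
ultralimits of sequences. -/
structure IsSubshift (Y : Set (ℤ → A)) : Prop where
  shift_mem : ∀ z ∈ Y, ∀ a, shift a z ∈ Y
  ulim_mem : ∀ (p : Ultrafilter ℕ) (w : ℕ → ℤ → A), (∀ᶠ k in p, w k ∈ Y) → ulim p w ∈ Y

theorem isSubshift_orbitClosure (χ : ℤ → A) : IsSubshift (orbitClosure χ) :=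
  ⟨fun _ hz a => shift_mem_orbitClosure hz a, fun _ _ hw => ulim_mem_orbitClosure hw⟩

theorem IsSubshift.sep_not_hasWindow {Y : Set (ℤ → A)} (hY : IsSubshift Y) (P : ℤ → A) (W : ℕ) :
    IsSubshift {z ∈ Y | ¬ HasWindow z P W} := by
  refine ⟨fun z ⟨hzY, hz⟩ a => ⟨hY.shift_mem z hzY a, fun ⟨t, ht⟩ => hz ⟨a + t, ?_⟩⟩,
    fun p w hw => ⟨hY.ulim_mem p w (hw.mono fun _ h => h.1), fun ⟨t, ht⟩ => ?_⟩⟩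
  · simpa only [shift, add_assoc] using ht
  · obtain ⟨k, hk, hagree⟩ :=
      (hw.and (eventually_eqOn_ulim p w (Finset.Icc (t - W) (t + W)))).exists
    refine hk.2 ⟨t, fun v hv => ?_⟩
    rw [hagree _ (Finset.mem_Icc.2 (by rw [abs_le] at hv; omega)), ht v hv]

theorem IsSubshift.exists_bounded_gaps {Y : Set (ℤ → A)} (hY : IsSubshift Y) {ψ : ℤ → A}
    (hψ : ψ ∈ Y) {P : ℤ → A} {W : ℕ} (hP : ∀ z ∈ Y, HasWindow z P W) :
    ∃ K : ℕ, ∀ t : ℤ, ∃ s : ℤ, |s - t| ≤ K ∧ ∀ v : ℤ, |v| ≤ W → ψ (s + v) = P v := by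
  by_contra! h
  choose t ht using h
  let p := hyperfilter ℕ
  obtain ⟨s, hs⟩ := hP _ (hY.ulim_mem p (fun K => shift (t K) ψ)
    (Eventually.of_forall fun K => hY.shift_mem ψ hψ (t K)))
  obtain ⟨K, hagree, hK⟩ := ((eventually_eqOn_ulim p (fun K => shift (t K) ψ)
    (Finset.Icc (s - W) (s + W))).and (eventually_hyperfilter_ge (s.natAbs))).exists
  obtain ⟨v, hv, hne⟩ := ht K (t K + s) (by rw [add_sub_cancel_left, Int.abs_eq_natAbs]; omega)
  apply hne
  rw [add_assoc, ← hs v hv]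
  exact hagree _ (Finset.mem_Icc.2 (by rw [abs_le] at hv; omega))

theorem isSubshift_shrinkingSubshift (χ : ℤ → A) (k : ℕ) :
    IsSubshift (shrinkingSubshift χ k) := by
  induction k with
  | zero => exact isSubshift_orbitClosure χ
  | succ k ih =>
    rw [shrinkingSubshift]
    split_ifs
    exacts [ih.sep_not_hasWindow _ _, ih]

theorem exists_forall_mem_shrinkingSubshift (χ : ℤ → A) :
    ∃ ψ, ∀ k, ψ ∈ shrinkingSubshift χ k := by
  choose z hz using shrinkingSubshift_nonempty χ
  refine ⟨ulim (hyperfilter ℕ) z, fun k => (isSubshift_shrinkingSubshift χ k).ulim_mem _ _ ?_⟩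
  exact (eventually_hyperfilter_ge k).mono fun j hj => antitone_shrinkingSubshift χ hj (hz j)

theorem exists_isUniformlyRecurrent_mem_orbitClosure (χ : ℤ → A) :
    ∃ ψ ∈ orbitClosure χ, IsUniformlyRecurrent ψ := by
  obtain ⟨ψ, hψ⟩ := exists_forall_mem_shrinkingSubshift χ
  refine ⟨ψ, hψ 0, fun c W => ?_⟩
  obtain ⟨c', hc'⟩ := shift_mem_orbitClosure (hψ 0) c W
  have hk := Denumerable.ofNat_encode (c', W)
  set k := Encodable.encode (c', W)
  have hwin := forall_hasWindow_of_mem_shrinkingSubshift (hψ (k + 1)) (by rw [hk]; exact ⟨c, hc'⟩)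
  rw [hk] at hwin
  obtain ⟨K, hK⟩ := (isSubshift_shrinkingSubshift χ k).exists_bounded_gaps (hψ k) hwin
  exact ⟨K, fun t => (hK t).imp fun s hs => ⟨hs.1, fun v hv => (hs.2 v hv).trans (hc' v hv).symm⟩⟩

end OrbitClosure

section Polynomials

/-- The integer `q(n)`; meaningful only when `q` takes an integer value at `n`. -/
noncomputable def ev (q : ℚ[X]) (n : ℤ) : ℤ := (q.eval (n : ℚ)).num

structure IsAdmissible (q : ℚ[X]) : Prop where
  intValued : ∀ n : ℤ, ∃ m : ℤ, q.eval (n : ℚ) = m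
  eval_zero : q.eval 0 = 0

/-- PET differencing: `petDiff q r a` is the polynomial `n ↦ q (n + a) - q a - r n`. -/
noncomputable def petDiff (q r : ℚ[X]) (a : ℤ) : ℚ[X] := taylor (a : ℚ) q - C (q.eval (a : ℚ)) - r

variable {q r : ℚ[X]}

@[simp]
theorem ev_zero_left (n : ℤ) : ev 0 n = 0 := by simp [ev]

theorem IsAdmissible.cast_ev (hq : IsAdmissible q) (n : ℤ) : (ev q n : ℚ) = q.eval (n : ℚ) := by
  obtain ⟨m, hm⟩ := hq.intValued n
  rw [ev, hm, Rat.num_intCast]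

theorem IsAdmissible.ev_zero (hq : IsAdmissible q) : ev q 0 = 0 := by
  rw [ev, Int.cast_zero, hq.eval_zero, Rat.num_zero]

theorem eval_petDiff (a : ℤ) (x : ℚ) :
    (petDiff q r a).eval x = q.eval (x + a) - q.eval (a : ℚ) - r.eval x := by
  simp [petDiff, taylor_eval]

theorem IsAdmissible.petDiff (hq : IsAdmissible q) (hr : IsAdmissible r) (a : ℤ) :
    IsAdmissible (petDiff q r a) := by
  refine ⟨fun n => ⟨ev q (n + a) - ev q a - ev r n, ?_⟩, by simp [eval_petDiff, hr.eval_zero]⟩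
  push_cast
  rw [eval_petDiff, hq.cast_ev, hq.cast_ev, hr.cast_ev, Int.cast_add]

theorem ev_petDiff (hq : IsAdmissible q) (hr : IsAdmissible r) (a n : ℤ) :
    ev (petDiff q r a) n = ev q (n + a) - ev q a - ev r n := by
  have h := (hq.petDiff hr a).cast_ev n
  rw [eval_petDiff, ← Int.cast_add, ← hq.cast_ev, ← hq.cast_ev, ← hr.cast_ev] at h
  exact_mod_cast h

theorem natDegree_petDiff_le (h : r.natDegree ≤ q.natDegree) (a : ℤ) :
    (petDiff q r a).natDegree ≤ q.natDegree := by
  refine (natDegree_sub_le_of_le (natDegree_sub_le_of_le (natDegree_taylor _ _).le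
    (natDegree_C _).le) h).trans ?_
  simp

theorem coeff_petDiff_natDegree (hq : q.natDegree ≠ 0) (a : ℤ) :
    (petDiff q r a).coeff q.natDegree = q.leadingCoeff - r.coeff q.natDegree := by
  simp [petDiff, coeff_taylor_natDegree, coeff_C, hq]

theorem petDiff_of_natDegree_lt (h : r.natDegree < q.natDegree) (a : ℤ) :
    (petDiff q r a).natDegree = q.natDegree ∧ (petDiff q r a).leadingCoeff = q.leadingCoeff := by
  have hcoeff := coeff_petDiff_natDegree (r := r) h.ne_bot a
  rw [coeff_eq_zero_of_natDegree_lt h, sub_zero] at hcoeff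
  have hdeg : (petDiff q r a).natDegree = q.natDegree :=
    natDegree_eq_of_le_of_coeff_ne_zero (natDegree_petDiff_le h.le a)
      (hcoeff ▸ leadingCoeff_ne_zero.2 (ne_zero_of_natDegree_gt h))
  exact ⟨hdeg, by rw [leadingCoeff, hdeg, hcoeff]⟩

theorem leadingCoeff_petDiff {a : ℤ} (h : (petDiff q r a).natDegree = q.natDegree)
    (hq : q.natDegree ≠ 0) :
    (petDiff q r a).leadingCoeff = q.leadingCoeff - r.coeff q.natDegree := by
  rw [leadingCoeff, h, coeff_petDiff_natDegree hq]

theorem IsAdmissible.natDegree_ne_zero (hq : IsAdmissible q) (h0 : q ≠ 0) :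
    q.natDegree ≠ 0 := by
  intro h
  rw [eq_C_of_natDegree_eq_zero h, coeff_zero_eq_eval_zero, hq.eval_zero, C_0] at h0
  exact h0 rfl

end Polynomials

section Weight

/-- `ω ^ B * f B + ⋯ + ω * f 1`. -/
noncomputable def ordinalWeight (f : ℕ → ℕ) : ℕ → Ordinal.{0}
  | 0 => 0
  | k + 1 => ω ^ ((k : Ordinal) + 1) * f (k + 1) + ordinalWeight f k

theorem ordinalWeight_lt (f : ℕ → ℕ) (k : ℕ) : ordinalWeight f k < ω ^ ((k : Ordinal) + 1) := by
  induction k with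
  | zero => simp [ordinalWeight, Ordinal.omega0_pos]
  | succ k ih =>
    rw [ordinalWeight, Nat.cast_succ]
    have hlt : ω ^ ((k : Ordinal) + 1) < ω ^ ((k : Ordinal) + 1 + 1) :=
      (Ordinal.opow_lt_opow_iff_right Ordinal.one_lt_omega0).2 (Order.lt_add_one_iff.2 le_rfl)
    exact Ordinal.isPrincipal_add_omega0_opow _
      (Ordinal.mul_lt_omega0_opow (by positivity) hlt (Ordinal.natCast_lt_omega0 _)) (ih.trans hlt)

/-- Weights compare like base-`ω` numerals. -/
theorem ordinalWeight_lt_ordinalWeight {f g : ℕ → ℕ} {k₀ : ℕ} (hk₀ : k₀ ≠ 0) (hlt : f k₀ < g k₀)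
    (hle : ∀ l, k₀ < l → f l ≤ g l) {B : ℕ} (hB : k₀ ≤ B) :
    ordinalWeight f B < ordinalWeight g B := by
  induction B with
  | zero => omega
  | succ n ih =>
    rw [ordinalWeight, ordinalWeight]
    rcases hB.eq_or_lt with rfl | hB
    · calc ω ^ ((n : Ordinal) + 1) * f (n + 1) + ordinalWeight f n
          < ω ^ ((n : Ordinal) + 1) * f (n + 1) + ω ^ ((n : Ordinal) + 1) := by
            gcongr; exact ordinalWeight_lt f n
        _ = ω ^ ((n : Ordinal) + 1) * ((f (n + 1) + 1 : ℕ) : Ordinal) := by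
            rw [Nat.cast_succ, mul_add_one]
        _ ≤ ω ^ ((n : Ordinal) + 1) * g (n + 1) + ordinalWeight g n :=
            le_add_right (mul_le_mul_right (Nat.cast_le.2 hlt) _)
    · calc ω ^ ((n : Ordinal) + 1) * f (n + 1) + ordinalWeight f n
          < ω ^ ((n : Ordinal) + 1) * f (n + 1) + ordinalWeight g n := by
            gcongr; exact ih (by omega)
        _ ≤ ω ^ ((n : Ordinal) + 1) * g (n + 1) + ordinalWeight g n := by
            gcongr; exact hle _ hB

def leadingCoeffs (Q : Finset ℚ[X]) (k : ℕ) : Finset ℚ :=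
  {q ∈ Q | q.natDegree = k}.image leadingCoeff

/-- Bergelson's PET weight, truncated at degree `B`. -/
noncomputable def petWeight (B : ℕ) (Q : Finset ℚ[X]) : Ordinal.{0} :=
  ordinalWeight (fun k => (leadingCoeffs Q k).card) B

noncomputable def petFamily (Q : Finset ℚ[X]) (r : ℚ[X]) (Anc : Finset ℤ) : Finset ℚ[X] :=
  ((Q ×ˢ Anc).image fun qa => petDiff qa.1 r qa.2).erase 0

variable {Q : Finset ℚ[X]} {r : ℚ[X]} {Anc : Finset ℤ}

theorem mem_leadingCoeffs {k : ℕ} {c : ℚ} :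
    c ∈ leadingCoeffs Q k ↔ ∃ q ∈ Q, q.natDegree = k ∧ q.leadingCoeff = c := by
  simp [leadingCoeffs, and_assoc]

theorem mem_petFamily {d : ℚ[X]} :
    d ∈ petFamily Q r Anc ↔ d ≠ 0 ∧ ∃ q ∈ Q, ∃ a ∈ Anc, petDiff q r a = d := by
  simp [petFamily, and_assoc]

theorem zero_notMem_petFamily : 0 ∉ petFamily Q r Anc :=
  Finset.notMem_erase _ _

theorem leadingCoeffs_petFamily_subset (hmin : ∀ q ∈ Q, r.natDegree ≤ q.natDegree) {l : ℕ}
    (hl : r.natDegree < l) : leadingCoeffs (petFamily Q r Anc) l ⊆ leadingCoeffs Q l := by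
  intro c hc
  obtain ⟨_, hd, rfl, rfl⟩ := mem_leadingCoeffs.1 hc
  obtain ⟨-, q, hq, a, -, rfl⟩ := mem_petFamily.1 hd
  have hrq : r.natDegree < q.natDegree := by
    by_contra! h
    have := natDegree_petDiff_le (hmin q hq) a
    omega
  obtain ⟨hdeg, hlc⟩ := petDiff_of_natDegree_lt hrq a
  exact mem_leadingCoeffs.2 ⟨q, hq, hdeg.symm, hlc.symm⟩

theorem leadingCoeffs_petFamily_subset_self (hmin : ∀ q ∈ Q, r.natDegree ≤ q.natDegree)
    (hr : r.natDegree ≠ 0) :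
    leadingCoeffs (petFamily Q r Anc) r.natDegree ⊆
      ((leadingCoeffs Q r.natDegree).erase r.leadingCoeff).image (· - r.leadingCoeff) := by
  intro c hc
  obtain ⟨_, hd, hdeg, rfl⟩ := mem_leadingCoeffs.1 hc
  obtain ⟨hd0, q, hq, a, -, rfl⟩ := mem_petFamily.1 hd
  obtain hrq | hrq := (hmin q hq).lt_or_eq
  · have := (petDiff_of_natDegree_lt hrq a).1
    omega
  have hlc := leadingCoeff_petDiff (hdeg.trans hrq) (hrq ▸ hr)
  rw [← hrq, ← leadingCoeff] at hlc
  refine Finset.mem_image.2 ⟨q.leadingCoeff, Finset.mem_erase.2 ⟨?_, ?_⟩, hlc.symm⟩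
  · rintro h
    rw [h, sub_self, leadingCoeff_eq_zero] at hlc
    exact hd0 hlc
  · exact mem_leadingCoeffs.2 ⟨q, hq, hrq.symm, rfl⟩

theorem petWeight_petFamily_lt {B : ℕ} (hr : r ∈ Q) (hmin : ∀ q ∈ Q, r.natDegree ≤ q.natDegree)
    (hr0 : r.natDegree ≠ 0) (hB : r.natDegree ≤ B) (Anc : Finset ℤ) :
    petWeight B (petFamily Q r Anc) < petWeight B Q := by
  refine ordinalWeight_lt_ordinalWeight hr0 ?_
    (fun l hl => Finset.card_le_card (leadingCoeffs_petFamily_subset hmin hl)) hB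
  calc _ ≤ _ := Finset.card_le_card (leadingCoeffs_petFamily_subset_self hmin hr0)
    _ ≤ _ := Finset.card_image_le
    _ < _ := Finset.card_erase_lt_of_mem (mem_leadingCoeffs.2 ⟨r, hr, rfl, rfl⟩)

end Weight

section Recurrence

variable {A : Type*}

theorem IsUniformlyRecurrent.exists_window_near_origin {ψ : ℤ → A} (hψ : IsUniformlyRecurrent ψ)
    {x : ℤ → A} (hx : x ∈ orbitClosure ψ) (W : ℕ) :
    ∃ K : ℕ, ∀ z ∈ orbitClosure ψ, ∃ s : ℤ, |s| ≤ K ∧ ∀ v : ℤ, |v| ≤ W → z (s + v) = x v := by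
  obtain ⟨c, hc⟩ := hx W
  obtain ⟨K, hK⟩ := hψ c W
  refine ⟨K, fun z hz => ?_⟩
  obtain ⟨τ, hτ⟩ := hz (K + W)
  obtain ⟨s, hs, hsc⟩ := hK τ
  refine ⟨s - τ, hs, fun v hv => ?_⟩
  rw [hτ _ (by rw [abs_le] at hs hv ⊢; omega), show τ + (s - τ + v) = s + v by ring, hsc v hv,
    hc v hv]

theorem exists_lt_window_eq [Finite A] (x : ℕ → ℤ → A) (W : ℕ) :
    ∃ j k, j < k ∧ k ≤ Nat.card (Set.Icc (-(W : ℤ)) W → A) ∧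
      ∀ v : ℤ, |v| ≤ W → x k v = x j v := by
  have := Fintype.ofFinite (Set.Icc (-(W : ℤ)) W → A)
  set T := Nat.card (Set.Icc (-(W : ℤ)) W → A)
  obtain ⟨j, k, hne, hjk⟩ := Fintype.exists_ne_map_eq_of_card_lt
    (fun j : Fin (T + 1) => fun v : Set.Icc (-(W : ℤ)) W => x j v)
    (by simp [T, Nat.card_eq_fintype_card])
  have hwin (v : ℤ) (hv : |v| ≤ W) : x k v = x j v :=
    (congrFun hjk ⟨v, abs_le.1 hv⟩).symm
  rcases lt_or_gt_of_ne hne with h | h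
  · exact ⟨j, k, h, by omega, hwin⟩
  · exact ⟨k, j, h, by omega, fun v hv => (hwin v hv).symm⟩

/-- Some point of the orbit closure of `ψ` repeats its `W`-window at every `q(n)`, `q ∈ Q`,
where `n` is a finite sum of terms of `y` of index at least `a`. -/
def HasIPReturn (ψ : ℤ → A) (y : ℕ → ℤ) (Q : Finset ℚ[X]) (W a : ℕ) : Prop :=
  ∃ F : Finset ℕ, F.Nonempty ∧ (∀ i ∈ F, a ≤ i) ∧ ∃ x ∈ orbitClosure ψ,
    ∀ q ∈ Q, ∀ v : ℤ, |v| ≤ W → x (ev q (∑ i ∈ F, y i) + v) = x v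

theorem hasIPReturn_empty (ψ : ℤ → A) (y : ℕ → ℤ) (W a : ℕ) : HasIPReturn ψ y ∅ W a :=
  ⟨{a}, Finset.singleton_nonempty a, by simp, ψ, self_mem_orbitClosure ψ, by simp⟩

def blockSum (F : ℕ → Finset ℕ) (y : ℕ → ℤ) (j k : ℕ) : ℤ :=
  ∑ u ∈ Finset.Ico j k, ∑ i ∈ F u, y i

theorem blockSum_update_of_le {F : ℕ → Finset ℕ} {y : ℕ → ℤ} {t k : ℕ} (G : Finset ℕ)
    (hk : k ≤ t) (j : ℕ) : blockSum (Function.update F t G) y j k = blockSum F y j k :=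
  Finset.sum_congr rfl fun u hu => by
    rw [Function.update_of_ne (by rw [Finset.mem_Ico] at hu; omega)]

theorem blockSum_update_succ {F : ℕ → Finset ℕ} {y : ℕ → ℤ} {t j : ℕ} (G : Finset ℕ)
    (hj : j ≤ t) :
    blockSum (Function.update F t G) y j (t + 1) = blockSum F y j t + ∑ i ∈ G, y i := by
  rw [blockSum, Finset.sum_Ico_succ_top hj, ← blockSum, blockSum_update_of_le G le_rfl,
    Function.update_self]

/-- The heart of colour focusing: `q(N + n) = (petDiff q r N)(n) + q(N) + r(n)`. -/
theorem shift_apply_ev_add {x z : ℤ → A} {q r : ℚ[X]} (hq : IsAdmissible q) (hr : IsAdmissible r)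
    {N n s : ℤ} {W M K : ℕ} (hN : |ev q N| ≤ M) (hs : |s| ≤ K)
    (hzx : ∀ v : ℤ, |v| ≤ W + M → z (s + v) = x v)
    (hz : ∀ v : ℤ, |v| ≤ W + K + M → z (ev (petDiff q r N) n + v) = z v)
    {v : ℤ} (hv : |v| ≤ W) :
    shift (s - ev r n) z (ev q (N + n) + v) = x (ev q N + v) := by
  have hsplit : s - ev r n + (ev q (N + n) + v) = ev (petDiff q r N) n + (s + (ev q N + v)) := by
    rw [ev_petDiff hq hr, add_comm n N]
    ring
  rw [shift, hsplit, hz _ (by rw [abs_le] at hN hs hv ⊢; omega),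
    hzx _ (by rw [abs_le] at hN hv ⊢; omega)]

/-- Colour focusing: points `x 0, …, x t` of the orbit closure of `ψ` and blocks of indices
`b j ≤ F j < b (j + 1)` such that `x k` repeats the `W`-window of `x j` at every `q(n)`, `q ∈ Q`,
where `n` is the sum of `y` over the blocks `j, …, k - 1`. -/
structure FocusingChain (ψ : ℤ → A) (y : ℕ → ℤ) (Q : Finset ℚ[X]) (W a t : ℕ) where
  x : ℕ → ℤ → A
  F : ℕ → Finset ℕ
  b : ℕ → ℕ
  b_zero : b 0 = a
  x_mem : ∀ j ≤ t, x j ∈ orbitClosure ψ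
  F_nonempty : ∀ j < t, (F j).Nonempty
  mem_F : ∀ j < t, ∀ i ∈ F j, b j ≤ i ∧ i < b (j + 1)
  focus : ∀ j k, j < k → k ≤ t → ∀ q ∈ Q, ∀ v : ℤ, |v| ≤ W →
    x k (ev q (blockSum F y j k) + v) = x j v

namespace FocusingChain

variable {ψ : ℤ → A} {y : ℕ → ℤ} {Q : Finset ℚ[X]} {W a t : ℕ}

def zero (ψ : ℤ → A) (y : ℕ → ℤ) (Q : Finset ℚ[X]) (W a : ℕ) : FocusingChain ψ y Q W a 0 where
  x _ := ψ
  F _ := ∅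
  b _ := a
  b_zero := rfl
  x_mem _ _ := self_mem_orbitClosure ψ
  F_nonempty _ h := absurd h (Nat.not_lt_zero _)
  mem_F _ h := absurd h (Nat.not_lt_zero _)
  focus _ _ h hk := absurd (h.trans_le hk) (Nat.not_lt_zero _)

def snoc (c : FocusingChain ψ y Q W a t) (G : Finset ℕ) (hG : G.Nonempty)
    (hGb : ∀ i ∈ G, c.b t ≤ i) (x' : ℤ → A) (hx' : x' ∈ orbitClosure ψ)
    (hfocus : ∀ j ≤ t, ∀ q ∈ Q, ∀ v : ℤ, |v| ≤ W →
      x' (ev q (blockSum c.F y j t + ∑ i ∈ G, y i) + v) = c.x j v) :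
    FocusingChain ψ y Q W a (t + 1) where
  x := Function.update c.x (t + 1) x'
  F := Function.update c.F t G
  b := Function.update c.b (t + 1) (G.max' hG + 1)
  b_zero := by rw [Function.update_of_ne (by omega), c.b_zero]
  x_mem j hj := by
    rcases (Nat.le_succ_iff.1 hj).symm with rfl | hj
    · rwa [Function.update_self]
    · rw [Function.update_of_ne (by omega)]; exact c.x_mem j hj
  F_nonempty j hj := by
    rcases (Nat.lt_succ_iff_lt_or_eq.1 hj).symm with rfl | hj
    · rwa [Function.update_self]
    · rw [Function.update_of_ne (by omega)]; exact c.F_nonempty j hj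
  mem_F j hj i hi := by
    rcases (Nat.lt_succ_iff_lt_or_eq.1 hj).symm with rfl | hj
    · rw [Function.update_self] at hi
      rw [Function.update_of_ne (by omega), Function.update_self]
      exact ⟨hGb i hi, Nat.lt_succ_of_le (G.le_max' i hi)⟩
    · rw [Function.update_of_ne (by omega)] at hi
      rw [Function.update_of_ne (by omega), Function.update_of_ne (by omega)]
      exact c.mem_F j hj i hi
  focus j k hjk hk q hq v hv := by
    rcases (Nat.le_succ_iff.1 hk).symm with rfl | hk
    · rw [Function.update_self, Function.update_of_ne (by omega),
        blockSum_update_succ G (by omega)]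
      exact hfocus j (by omega) q hq v hv
    · rw [Function.update_of_ne (by omega), Function.update_of_ne (by omega),
        blockSum_update_of_le G hk]
      exact c.focus j k hjk hk q hq v hv

theorem b_mono (c : FocusingChain ψ y Q W a t) {j k : ℕ} (hjk : j ≤ k) (hk : k ≤ t) :
    c.b j ≤ c.b k := by
  induction k with
  | zero => rw [Nat.le_zero.1 hjk]
  | succ k ih =>
    rcases hjk.eq_or_lt with rfl | hjk
    · exact le_rfl
    obtain ⟨i, hi⟩ := c.F_nonempty k (by omega)
    have := c.mem_F k (by omega) i hi
    exact (ih (by omega) (by omega)).trans (by omega)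

theorem sum_biUnion (c : FocusingChain ψ y Q W a t) {j k : ℕ} (hk : k ≤ t) :
    ∑ i ∈ (Finset.Ico j k).biUnion c.F, y i = blockSum c.F y j k := by
  refine Finset.sum_biUnion fun u hu u' hu' hne => ?_
  have hsep : ∀ u u', u < u' → u' < k → Disjoint (c.F u) (c.F u') := fun u u' h hu' =>
    Finset.disjoint_left.2 fun i hi hi' => by
      have := c.mem_F u (by omega) i hi
      have := c.mem_F u' (by omega) i hi'
      have := c.b_mono (show u + 1 ≤ u' by omega) (by omega)
      omega
  simp only [Finset.coe_Ico, Set.mem_Ico] at hu hu'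
  rcases lt_or_gt_of_ne hne with h | h
  exacts [hsep u u' h hu'.2, (hsep u' u h hu.2).symm]

theorem hasIPReturn (c : FocusingChain ψ y Q W a t) {j k : ℕ} (hjk : j < k) (hk : k ≤ t)
    (hwin : ∀ v : ℤ, |v| ≤ W → c.x k v = c.x j v) : HasIPReturn ψ y Q W a := by
  obtain ⟨i₀, hi₀⟩ := c.F_nonempty j (by omega)
  refine ⟨(Finset.Ico j k).biUnion c.F, ⟨i₀, Finset.mem_biUnion.2 ⟨j, by simp [hjk], hi₀⟩⟩,
    fun i hi => ?_, c.x k, c.x_mem k hk, fun q hq v hv => ?_⟩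
  · obtain ⟨u, hu, hiu⟩ := Finset.mem_biUnion.1 hi
    rw [Finset.mem_Ico] at hu
    have := c.mem_F u (by omega) i hiu
    have := c.b_mono (Nat.zero_le u) (by omega)
    rw [c.b_zero] at this
    omega
  · rw [c.sum_biUnion hk, c.focus j k hjk hk q hq v hv, hwin v hv]

theorem exists_abs_ev_blockSum_le (c : FocusingChain ψ y Q W a t) :
    ∃ M : ℕ, ∀ j ≤ t, ∀ q ∈ Q, |ev q (blockSum c.F y j t)| ≤ M := by
  refine ⟨((Finset.range (t + 1)) ×ˢ Q).sup fun jq => (ev jq.2 (blockSum c.F y jq.1 t)).natAbs,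
    fun j hj q hq => ?_⟩
  rw [Int.abs_eq_natAbs, Nat.cast_le]
  exact Finset.le_sup (f := fun jq : ℕ × ℚ[X] => (ev jq.2 (blockSum c.F y jq.1 t)).natAbs)
    (Finset.mk_mem_product (Finset.mem_range.2 (Nat.lt_succ_of_le hj)) hq)

theorem extend (hψ : IsUniformlyRecurrent ψ) (hQ : ∀ q ∈ Q, IsAdmissible q) {r : ℚ[X]}
    (hr : IsAdmissible r) (hD : ∀ Anc W' a', HasIPReturn ψ y (petFamily Q r Anc) W' a')
    (c : FocusingChain ψ y Q W a t) : Nonempty (FocusingChain ψ y Q W a (t + 1)) := by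
  obtain ⟨M, hM⟩ := c.exists_abs_ev_blockSum_le
  obtain ⟨K, hK⟩ := hψ.exists_window_near_origin (c.x_mem t le_rfl) (W + M)
  obtain ⟨G, hG, hGb, z, hz, hzret⟩ :=
    hD ((Finset.range (t + 1)).image (blockSum c.F y · t)) (W + K + M) (c.b t)
  obtain ⟨s, hs, hzx⟩ := hK z hz
  have hret (j : ℕ) (hj : j ≤ t) (q : ℚ[X]) (hq : q ∈ Q) (v : ℤ) (hv : |v| ≤ W + K + M) :
      z (ev (petDiff q r (blockSum c.F y j t)) (∑ i ∈ G, y i) + v) = z v := by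
    by_cases h0 : petDiff q r (blockSum c.F y j t) = 0
    · rw [h0, ev_zero_left, zero_add]
    refine hzret _ (mem_petFamily.2 ⟨h0, q, hq, _, ?_, rfl⟩) v (by exact_mod_cast hv)
    exact Finset.mem_image.2 ⟨j, Finset.mem_range.2 (Nat.lt_succ_of_le hj), rfl⟩
  refine ⟨c.snoc G hG hGb _ (shift_mem_orbitClosure hz (s - ev r (∑ i ∈ G, y i)))
    fun j hj q hq v hv => ?_⟩
  rw [shift_apply_ev_add (hQ q hq) hr (hM j hj q hq) hs hzx (hret j hj q hq) hv]
  rcases hj.lt_or_eq with hjt | rfl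
  · exact c.focus j t hjt le_rfl q hq v hv
  · rw [blockSum, Finset.Ico_self, Finset.sum_empty, (hQ q hq).ev_zero, zero_add]

end FocusingChain

variable [Finite A]

theorem hasIPReturn_of_natDegree_le {ψ : ℤ → A} (hψ : IsUniformlyRecurrent ψ) (y : ℕ → ℤ)
    (B : ℕ) (Q : Finset ℚ[X]) (hQ0 : 0 ∉ Q) (hQ : ∀ q ∈ Q, IsAdmissible q)
    (hQB : ∀ q ∈ Q, q.natDegree ≤ B) (W a : ℕ) : HasIPReturn ψ y Q W a := by
  induction Q using (InvImage.wf (petWeight B) wellFounded_lt).induction generalizing W a with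
  | _ Q IH =>
  rcases Q.eq_empty_or_nonempty with rfl | hne
  · exact hasIPReturn_empty ψ y W a
  obtain ⟨r, hr, hmin⟩ := Q.exists_min_image natDegree hne
  have hr0 := (hQ r hr).natDegree_ne_zero (fun h => hQ0 (h ▸ hr))
  have hD (Anc : Finset ℤ) (W' a' : ℕ) : HasIPReturn ψ y (petFamily Q r Anc) W' a' := by
    refine IH _ (petWeight_petFamily_lt hr hmin hr0 (hQB r hr) Anc) zero_notMem_petFamily
      (fun d hd => ?_) (fun d hd => ?_) W' a' <;>
    obtain ⟨-, q, hq, a, -, rfl⟩ := mem_petFamily.1 hd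
    exacts [(hQ q hq).petDiff (hQ r hr) a, (natDegree_petDiff_le (hmin q hq) a).trans (hQB q hq)]
  have hchain (t : ℕ) : Nonempty (FocusingChain ψ y Q W a t) := by
    induction t with
    | zero => exact ⟨FocusingChain.zero ψ y Q W a⟩
    | succ t ih => exact ih.some.extend hψ hQ (hQ r hr) hD
  obtain ⟨j, k, hjk, hk, hwin⟩ := exists_lt_window_eq (hchain _).some.x W
  exact (hchain _).some.hasIPReturn hjk hk hwin

theorem hasIPReturn {ψ : ℤ → A} (hψ : IsUniformlyRecurrent ψ) (y : ℕ → ℤ) (Q : Finset ℚ[X])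
    (hQ : ∀ q ∈ Q, IsAdmissible q) (W a : ℕ) : HasIPReturn ψ y Q W a := by
  obtain ⟨F, hF, hFa, x, hx, hret⟩ := hasIPReturn_of_natDegree_le hψ y (Q.sup natDegree)
    (Q.erase 0) (Finset.notMem_erase 0 Q) (fun q hq => hQ q (Finset.mem_of_mem_erase hq))
    (fun q hq => Finset.le_sup (Finset.mem_of_mem_erase hq)) W a
  refine ⟨F, hF, hFa, x, hx, fun q hq v hv => ?_⟩
  rcases eq_or_ne q 0 with rfl | h0
  · rw [ev_zero_left, zero_add]
  · exact hret q (Finset.mem_erase.2 ⟨h0, hq⟩) v hv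

end Recurrence

section Integers

def SyndeticZ (T : Set ℤ) : Prop :=
  ∃ N : ℕ, ∀ x : ℤ, ∃ i : ℕ, 1 ≤ i ∧ i ≤ N ∧ x + i ∈ T

theorem SyndeticZ.piecewiseSyndeticZ {T : Set ℤ} (hT : SyndeticZ T) : PiecewiseSyndeticZ T :=
  let ⟨N, hN⟩ := hT
  ⟨N, fun _ => ⟨0, fun k _ => hN (0 + k)⟩⟩

theorem ThickZ.exists_forall_sum_mem {U : Set ℤ} (hU : ThickZ U) :
    ∃ y : ℕ → ℤ, ∀ F : Finset ℕ, F.Nonempty → ∑ i ∈ F, y i ∈ U := by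
  choose a ha using hU
  -- `y k` is the midpoint of an interval of length `2 * B k` in `U`, where `B k = ∑ i < k, |y i|`,
  -- so every finite sum with largest index `k` stays in that interval.
  let B : ℕ → ℕ := fun k => Nat.rec (motive := fun _ => ℕ) 0
    (fun _ Bk => Bk + (a (2 * Bk) + (Bk : ℤ)).natAbs) k
  let y : ℕ → ℤ := fun k => a (2 * B k) + (B k : ℤ)
  have hB (k : ℕ) : (B k : ℤ) = ∑ i ∈ Finset.range k, |y i| := by
    induction k with
    | zero => rfl
    | succ k ih =>
      rw [Finset.sum_range_succ, ← ih, Int.abs_eq_natAbs]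
      push_cast [B]
      rfl
  refine ⟨y, fun F hF => ?_⟩
  set k := F.max' hF
  have hτ : |∑ i ∈ F.erase k, y i| ≤ B k := by
    rw [hB]
    refine (Finset.abs_sum_le_sum_abs _ _).trans
      (Finset.sum_le_sum_of_subset_of_nonneg (fun i hi => ?_) fun _ _ _ => abs_nonneg _)
    exact Finset.mem_range.2 (lt_of_le_of_ne (F.le_max' i (Finset.mem_of_mem_erase hi))
      (Finset.ne_of_mem_erase hi))
  rw [← Finset.add_sum_erase F y (F.max'_mem hF)]
  have hmem := ha (2 * B k) ((B k : ℤ) + ∑ i ∈ F.erase k, y i).toNat (by rw [abs_le] at hτ; omega)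
  rwa [Int.toNat_of_nonneg (by rw [abs_le] at hτ; omega), ← add_assoc] at hmem

theorem syndeticZ_of_forall_exists_sum_mem {T : Set ℤ}
    (hT : ∀ y : ℕ → ℤ, ∃ F : Finset ℕ, F.Nonempty ∧ ∑ i ∈ F, y i ∈ T) : SyndeticZ T := by
  unfold SyndeticZ
  by_contra! h
  have hthick : ThickZ Tᶜ := fun L => by
    obtain ⟨x, hx⟩ := h (L + 1)
    exact ⟨x + 1, fun k hk => by
      simpa [add_assoc, add_comm (1 : ℤ)] using hx (k + 1) (by omega) (by omega)⟩
  obtain ⟨y, hy⟩ := ThickZ.exists_forall_sum_mem hthick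
  obtain ⟨F, hF, hFT⟩ := hT y
  exact hy F hF hFT

theorem exists_local_coloring {S : Set ℤ} {N : ℕ}
    (hS : ThickZ {x : ℤ | ∃ i : ℕ, 1 ≤ i ∧ i ≤ N ∧ x + (i : ℤ) ∈ S}) (L : ℕ) :
    ∃ (c : ℤ → Fin N) (b : ℤ), ∀ v : ℤ, |v| ≤ L → b + v + (c v : ℕ) ∈ S := by
  obtain ⟨a, ha⟩ := hS (2 * L)
  have hN : 0 < N := by
    obtain ⟨i, hi, hiN, -⟩ := ha 0 (Nat.zero_le _)
    omega
  have hc (v : ℤ) : ∃ c : Fin N, |v| ≤ L → a + L + 1 + v + (c : ℕ) ∈ S := by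
    by_cases hv : |v| ≤ L
    · rw [abs_le] at hv
      obtain ⟨i, hi, hiN, hmem⟩ := ha (L + v).toNat (by omega)
      refine ⟨⟨i - 1, by omega⟩, fun _ => ?_⟩
      convert hmem using 1
      push_cast [Nat.cast_sub hi]
      omega
    · exact ⟨⟨0, hN⟩, fun h => absurd h hv⟩
  choose c hc using hc
  exact ⟨c, a + L + 1, hc⟩

theorem exists_coloring_of_piecewiseSyndeticZ {S : Set ℤ} (hS : PiecewiseSyndeticZ S) :
    ∃ (N : ℕ) (χ : ℤ → Fin N), ∀ G : Finset ℤ, ∃ b : ℤ, ∀ v ∈ G, b + v + (χ v : ℕ) ∈ S := by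
  obtain ⟨N, hN⟩ := hS
  choose c b hcb using exists_local_coloring hN
  refine ⟨N, ulim (hyperfilter ℕ) c, fun G => ?_⟩
  obtain ⟨L, hagree, hL⟩ := ((eventually_eqOn_ulim _ c G).and
    (eventually_hyperfilter_ge (G.sup Int.natAbs))).exists
  refine ⟨b L, fun v hv => hagree v hv ▸ hcb L v ?_⟩
  rw [Int.abs_eq_natAbs, Nat.cast_le]
  exact (Finset.le_sup hv).trans hL

theorem exists_add_mem_of_forall_apply_eq {S : Set ℤ} {N : ℕ} {χ x : ℤ → Fin N}
    (hχ : ∀ G : Finset ℤ, ∃ b : ℤ, ∀ v ∈ G, b + v + (χ v : ℕ) ∈ S) (hx : x ∈ orbitClosure χ)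
    {ι : Type*} [Fintype ι] (e : ι → ℤ) (he : ∀ i, x (e i) = x 0) :
    ∃ m : ℤ, ∀ i, m + e i ∈ S := by
  obtain ⟨t, ht⟩ := hx (Finset.univ.sup fun i => (e i).natAbs)
  obtain ⟨b, hb⟩ := hχ (Finset.univ.image (t + e ·))
  refine ⟨b + t + (x 0 : ℕ), fun i => ?_⟩
  have hwin : x (e i) = χ (t + e i) := ht (e i) (by
    rw [Int.abs_eq_natAbs, Nat.cast_le]
    exact Finset.le_sup (f := fun i => (e i).natAbs) (Finset.mem_univ i))
  have := hb (t + e i) (Finset.mem_image_of_mem _ (Finset.mem_univ i))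
  rwa [← hwin, he i, ← add_assoc, add_right_comm _ (e i)] at this

end Integers

end PolyVdW

open PolyVdW

theorem corB_general (d : ℕ) (p : Fin d → ℤ → ℤ)
    (hpoly : ∀ i, IsIntPoly (p i)) (hzero : ∀ i, p i 0 = 0)
    (S : Set ℤ) (hS : PiecewiseSyndeticZ S) :
    PiecewiseSyndeticZ {n : ℤ | ∃ m : ℤ, ∀ i, m + p i n ∈ S} := by
  obtain ⟨N, χ, hχ⟩ := exists_coloring_of_piecewiseSyndeticZ hS
  obtain ⟨ψ, hψχ, hψ⟩ := exists_isUniformlyRecurrent_mem_orbitClosure χ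
  choose q hq using hpoly
  have hadm (i : Fin d) : IsAdmissible (q i) :=
    ⟨fun n => ⟨p i n, hq i n⟩, by simpa [hzero] using hq i 0⟩
  have hev (i : Fin d) (n : ℤ) : ev (q i) n = p i n := by
    exact_mod_cast ((hadm i).cast_ev n).trans (hq i n)
  refine SyndeticZ.piecewiseSyndeticZ (syndeticZ_of_forall_exists_sum_mem fun y => ?_)
  obtain ⟨F, hF, -, x, hx, hret⟩ :=
    hasIPReturn hψ y (Finset.univ.image q) (by simpa using hadm) 0 0
  exact ⟨F, hF, exists_add_mem_of_forall_apply_eq hχ (orbitClosure_subset hψχ hx) _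
    fun i => by simpa [hev] using hret (q i) (by simp) 0 le_rfl⟩

/-- Corollary of Theorem B -/
theorem corB (d : ℕ) (hd : 0 < d) (p : Fin d → ℤ → ℤ)
    (hpoly : ∀ i, IsIntPoly (p i)) (hzero : ∀ i, p i 0 = 0)
    (S : Set ℤ) (hS : PiecewiseSyndeticZ S) :
    PiecewiseSyndeticZ {n : ℤ | ∃ m : ℤ, ∀ i, m + p i n ∈ S} :=
  corB_general d p hpoly hzero S hS
end

section
/- Lemma 4.3: Let k ∈ ℕ and let q_1, …, q_k be nonconstant integral polynomials with q_i(0) = 0 for 1 ≤ i ≤ k. Then there exist 1 ≤ d ≤ k and a subfamily A = {p_1, …, p_d} ⊆ {q_1, …, q_k} such that A satisfies condition (♠) and {q_1, …, q_k} ⊆ {p_i^{[m]} : 1 ≤ i ≤ d, m ∈ ℤ}, where p^{[m]} denotes the polynomial n ↦ p(n+m) − p(m). -/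
/-- `p : ℤ → ℤ` agrees with a rational polynomial of degree at least `k`. -/
def PolyDegGe (p : ℤ → ℤ) (k : ℕ) : Prop :=
  ∃ q : Polynomial ℚ, (∀ n : ℤ, q.eval (n : ℚ) = (p n : ℚ)) ∧ k ≤ q.natDegree

/-- Condition (♠) for a family `p = {p 0, …, p (d-1)}` of integral polynomials:
all vanish at 0 and, after reordering by a permutation `e`, for some `s ≤ d`:
the first `s` are linear `n ↦ aᵢ n` with distinct nonzero integers `aᵢ`, the
remaining ones have degree at least 2, and for distinct non-linear members no
two shifts `n ↦ p(n+k) - p(k)` coincide. -/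
def Spade (d : ℕ) (p : Fin d → ℤ → ℤ) : Prop :=
  (∀ i, IsIntPoly (p i)) ∧ (∀ i, p i 0 = 0) ∧
  ∃ s : ℕ, s ≤ d ∧ ∃ e : Equiv.Perm (Fin d), ∃ a : Fin d → ℤ,
    (∀ i : Fin d, (i : ℕ) < s → a i ≠ 0 ∧ ∀ n : ℤ, p (e i) n = a i * n) ∧
    (∀ i j : Fin d, (i : ℕ) < s → (j : ℕ) < s → a i = a j → i = j) ∧
    (∀ i : Fin d, s ≤ (i : ℕ) → PolyDegGe (p (e i)) 2) ∧
    (∀ i j : Fin d, s ≤ (i : ℕ) → s ≤ (j : ℕ) → i ≠ j → ∀ k t : ℤ,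
      (fun n : ℤ => p (e j) (n + k) - p (e j) k) ≠
        (fun n : ℤ => p (e i) (n + t) - p (e i) t))

/-!
The shift relation `g = f^{[m]}` is an equivalence relation on functions vanishing at `0`,
because `(f^{[a]})^{[b]} = f^{[a+b]}` and `f^{[0]} = f`. Take one `q_j` from each class. Linear
members of distinct classes have distinct slopes, and non-linear ones have degree at least 2
and no common shift. Listing the linear representatives first gives (♠), and every `q_j` is a
shift of the representative of its class.
-/

/-- The shifted function `f^{[m]}`. -/
def shift (f : ℤ → ℤ) (m : ℤ) : ℤ → ℤ := fun n => f (n + m) - f m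

lemma shift_zero {f : ℤ → ℤ} (hf : f 0 = 0) : shift f 0 = f := by
  funext n
  simp [shift, hf]

lemma shift_shift (f : ℤ → ℤ) (a b : ℤ) : shift (shift f a) b = shift f (a + b) := by
  funext n
  simp only [shift, add_assoc, add_comm b a]
  ring

lemma eq_shift_of_shift_eq {f g : ℤ → ℤ} {a b : ℤ} (hf : f 0 = 0)
    (h : shift f a = shift g b) : f = shift g (b - a) := by
  rw [← shift_zero hf, ← add_neg_cancel a, ← shift_shift, h, shift_shift, sub_eq_add_neg]

def shiftSetoid {ι : Type*} (f : ι → ℤ → ℤ) (hf : ∀ i, f i 0 = 0) : Setoid ι where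
  r i j := ∃ m, f j = shift (f i) m
  iseqv :=
    { refl := fun i => ⟨0, (shift_zero (hf i)).symm⟩
      symm := fun {i j} ⟨m, h⟩ =>
        ⟨0 - m, eq_shift_of_shift_eq (hf i) (h.symm.trans (shift_zero (hf j)).symm)⟩
      trans := fun ⟨m, h⟩ ⟨m', h'⟩ => ⟨m + m', by rw [h', h, shift_shift]⟩ }

lemma IsIntPoly.polyDegGe_two_of_not_linear {f : ℤ → ℤ} (hf : IsIntPoly f) (h0 : f 0 = 0)
    (hlin : ¬ ∀ n, f n = f 1 * n) : PolyDegGe f 2 := by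
  obtain ⟨Q, hQ⟩ := hf
  refine ⟨Q, hQ, ?_⟩
  by_contra! hdeg
  have hform := Polynomial.eq_X_add_C_of_natDegree_le_one (Nat.le_of_lt_succ hdeg)
  have hc0 : Q.coeff 0 = 0 := by
    have h := hQ 0
    rw [hform] at h
    simpa [h0] using h
  have hval : ∀ n : ℤ, (f n : ℚ) = Q.coeff 1 * n := fun n => by
    rw [← hQ n, hform]
    simp [hc0]
  refine hlin fun n => ?_
  have : (f n : ℚ) = f 1 * n := by rw [hval n, hval 1, Int.cast_one, mul_one]
  exact_mod_cast this

lemma exists_equiv_fin_of_pred_first (α : Type*) [Fintype α] (P : α → Prop) [DecidablePred P] :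
    ∃ s d : ℕ, s ≤ d ∧ ∃ e : Fin d ≃ α, ∀ i : Fin d, (i : ℕ) < s ↔ P (e i) := by
  let e : Fin (Fintype.card {a // P a} + Fintype.card {a // ¬ P a}) ≃ α :=
    finSumFinEquiv.symm.trans
      (((Fintype.equivFin _).symm.sumCongr (Fintype.equivFin _).symm).trans (Equiv.sumCompl P))
  refine ⟨_, _, Nat.le_add_right _ _, e, fun i => ?_⟩
  induction i using Fin.addCases with
  | left i => simp [e, i.2, Subtype.prop]
  | right i => simpa [e] using ((Fintype.equivFin _).symm i).2

lemma spade_of_ne_shift {d s : ℕ} {p : Fin d → ℤ → ℤ} (hpoly : ∀ i, IsIntPoly (p i))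
    (hzero : ∀ i, p i 0 = 0) (hnc : ∀ i, ¬ ∃ c : ℤ, ∀ n : ℤ, p i n = c) (hs : s ≤ d)
    (hlin : ∀ i : Fin d, (i : ℕ) < s ↔ ∀ n, p i n = p i 1 * n)
    (hsep : ∀ i j m, p j = shift (p i) m → i = j) : Spade d p := by
  refine ⟨hpoly, hzero, s, hs, Equiv.refl _, fun i => p i 1, fun i hi => ?_,
    fun i j hi hj (hij : p i 1 = p j 1) => ?_, fun i hi => ?_, fun i j _ _ hij k t h => ?_⟩
  · have hl := (hlin i).mp hi
    exact ⟨fun (h1 : p i 1 = 0) => hnc i ⟨0, fun n => by rw [hl n, h1, zero_mul]⟩, hl⟩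
  · refine hsep i j 0 ?_
    rw [shift_zero (hzero i)]
    funext n
    rw [(hlin i).mp hi n, (hlin j).mp hj n, hij]
  · exact (hpoly i).polyDegGe_two_of_not_linear (hzero i) fun h => hi.not_gt ((hlin i).mpr h)
  · exact hij (hsep i j _ (eq_shift_of_shift_eq (hzero j) h))

/-- Lemma 4.3 -/
theorem lemma43 (k : ℕ) (hk : 0 < k) (q : Fin k → ℤ → ℤ)
    (hpoly : ∀ j, IsIntPoly (q j)) (hzero : ∀ j, q j 0 = 0)
    (hnc : ∀ j, ¬ ∃ c : ℤ, ∀ n : ℤ, q j n = c) :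
    ∃ d : ℕ, 1 ≤ d ∧ d ≤ k ∧ ∃ p : Fin d → ℤ → ℤ,
      (∀ i, ∃ j, p i = q j) ∧ Spade d p ∧
      ∀ j : Fin k, ∃ i : Fin d, ∃ m : ℤ, q j = fun n : ℤ => p i (n + m) - p i m := by
  classical
  let r := shiftSetoid q hzero
  obtain ⟨s, d, hsd, e, he⟩ := exists_equiv_fin_of_pred_first (Quotient r)
    fun c => ∀ n, q c.out n = q c.out 1 * n
  have hd : d = Fintype.card (Quotient r) := by simpa using Fintype.card_congr e
  refine ⟨d, ?_, ?_, fun i => q (e i).out, fun i => ⟨_, rfl⟩, ?_, fun j => ?_⟩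
  · exact hd ▸ Fintype.card_pos_iff.mpr ⟨⟦⟨0, hk⟩⟧⟩
  · simpa [hd] using Fintype.card_quotient_le r
  · refine spade_of_ne_shift (fun i => hpoly _) (fun i => hzero _) (fun i => hnc _) hsd he
      fun i j m h => e.injective (Quotient.out_equiv_out.mp ⟨m, h⟩)
  · obtain ⟨m, hm⟩ := Quotient.mk_out (s := r) j
    exact ⟨e.symm ⟦j⟧, m, by simp only [Equiv.apply_symm_apply]; exact hm⟩
end

section
/- Lemma 6.1: Let p_1, p_2 be two essentially distinct integral polynomials, each of degree ≥ 2. Then there exists a positive constant L, depending only on p_1 and p_2, such that whenever k_1, k_2 ∈ ℤ satisfy |k_1 − k_2| ≥ L, then for every pair (i_1,j_1) ≠ (i_2,j_2) in {1,2} × {1,2}, the one-variable polynomials n ↦ p_{i_1}(n + k_{j_1}) − p_{i_1}(k_{j_1}) and n ↦ p_{i_2}(n + k_{j_2}) − p_{i_2}(k_{j_2}) are essentially distinct. -/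
/-- Two integral polynomials are essentially distinct if their difference is not constant. -/
def EssDistinct (p q : ℤ → ℤ) : Prop :=
  ¬ ∃ c : ℤ, ∀ n : ℤ, p n - q n = c

/-!
If `q` has degree at least two and `q(X + a) = q + c` with `a ≠ 0`, then `q(na) = q(0) + nc` for
every `n : ℕ`, so `q` agrees with a linear polynomial at infinitely many points, which is absurd.
Hence for integral polynomials `p, p'` with `deg p ≥ 2` there is at most one `d` for which
`p(X + d) - p'` is constant. Since `n ↦ p(n + a) - p(a)` and `n ↦ p'(n + b) - p'(b)` differ by a
constant exactly when `p(X + (a - b)) - p'` does, they are essentially distinct once `|a - b|` exceeds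
that exceptional `d`; when `a = b` they are essentially distinct as soon as `p` and `p'` are.
-/

open Polynomial

namespace Polynomial

lemma eq_of_eval_intCast_eq {R : Type*} [CommRing R] [IsDomain R] [CharZero R] {r s : R[X]}
    (h : ∀ n : ℤ, r.eval (n : R) = s.eval (n : R)) : r = s :=
  eq_of_infinite_eval_eq r s <|
    (Set.infinite_range_of_injective Int.cast_injective).mono (by rintro _ ⟨n, rfl⟩; exact h n)

lemma taylor_sub_eq_add_C_of_taylor_sub_taylor_eq_C {R : Type*} [CommRing R] {q q' : R[X]}
    {a b c : R}
    (h : taylor a q - taylor b q' = C c) : taylor (a - b) q = q' + C c := by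
  have := congrArg (taylor (-b)) h
  rwa [map_sub, taylor_taylor, taylor_taylor, neg_add_cancel, taylor_zero, taylor_C,
    neg_add_eq_sub, sub_eq_iff_eq_add'] at this

variable {K : Type*} [Field K] [CharZero K]

lemma eq_zero_of_taylor_eq_add_C {q : K[X]} (hq : 2 ≤ q.natDegree) {a c : K}
    (h : taylor a q = q + C c) : a = 0 := by
  by_contra ha
  have hstep (x : K) : q.eval (x + a) = q.eval x + c := by
    simpa [taylor_eval] using congrArg (eval x) h
  have hmul (n : ℕ) : q.eval (n * a) = q.eval 0 + n * c := by
    induction n with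
    | zero => simp
    | succ n ih => push_cast; rw [add_mul, one_mul, hstep, ih]; ring
  have hlin : q = C (q.eval 0) + C (c / a) * X := by
    refine eq_of_infinite_eval_eq _ _ <|
      (Set.infinite_range_of_injective (f := fun n : ℕ => (n : K) * a) ?_).mono ?_
    · intro m n hmn
      exact_mod_cast mul_right_cancel₀ ha hmn
    · rintro _ ⟨n, rfl⟩
      simp only [Set.mem_ofPred_eq, hmul, eval_add, eval_C, eval_mul, eval_X]
      field_simp
  have : q.natDegree ≤ 1 := by rw [hlin]; compute_degree
  omega

lemma eq_of_taylor_eq_add_C {q q' : K[X]} (hq : 2 ≤ q.natDegree) {a b c c' : K}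
    (ha : taylor a q = q' + C c) (hb : taylor b q = q' + C c') : a = b := by
  have hdiff : taylor a q - taylor b q = C (c - c') := by rw [ha, hb, C_sub]; abel
  exact sub_eq_zero.mp (eq_zero_of_taylor_eq_add_C hq
    (taylor_sub_eq_add_C_of_taylor_sub_taylor_eq_C hdiff))

end Polynomial

lemma EssDistinct.symm {f g : ℤ → ℤ} (h : EssDistinct f g) : EssDistinct g f :=
  fun ⟨c, hc⟩ => h ⟨-c, fun n => by rw [← hc n]; ring⟩

lemma EssDistinct.normalizedShift {f g : ℤ → ℤ} (h : EssDistinct f g) (k : ℤ) :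
    EssDistinct (fun n => f (n + k) - f k) (fun n => g (n + k) - g k) :=
  fun ⟨c, hc⟩ => h ⟨c + f k - g k, fun n => by
    have := hc (n - k)
    simp only [sub_add_cancel] at this
    linarith⟩

section IntegralPolynomial

variable {p p' : ℤ → ℤ} {q q' : ℚ[X]}

lemma exists_taylor_eq_add_C_of_not_essDistinct (hq : ∀ n : ℤ, q.eval (n : ℚ) = p n)
    (hq' : ∀ n : ℤ, q'.eval (n : ℚ) = p' n) {a b : ℤ}
    (h : ¬ EssDistinct (fun n => p (n + a) - p a) (fun n => p' (n + b) - p' b)) :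
    ∃ c : ℚ, taylor ((a - b : ℤ) : ℚ) q = q' + C c := by
  obtain ⟨c, hc⟩ := not_not.mp h
  refine ⟨p a - p' b + c, ?_⟩
  push_cast
  refine taylor_sub_eq_add_C_of_taylor_sub_taylor_eq_C (eq_of_eval_intCast_eq fun n => ?_)
  have ha := hq (n + a)
  have hb := hq' (n + b)
  push_cast at ha hb
  simp only [eval_sub, taylor_eval, eval_C, ha, hb]
  have hcn := congrArg (Int.cast : ℤ → ℚ) (hc n)
  push_cast at hcn
  linarith

lemma exists_essDistinct_of_le_abs_sub (hq : ∀ n : ℤ, q.eval (n : ℚ) = p n)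
    (hq' : ∀ n : ℤ, q'.eval (n : ℚ) = p' n) (hdeg : 2 ≤ q.natDegree) :
    ∃ B : ℕ, ∀ a b : ℤ, (B : ℤ) ≤ |a - b| →
      EssDistinct (fun n => p (n + a) - p a) (fun n => p' (n + b) - p' b) := by
  by_cases hbad : ∃ a b : ℤ, ¬ EssDistinct (fun n => p (n + a) - p a) (fun n => p' (n + b) - p' b)
  · obtain ⟨a₀, b₀, h₀⟩ := hbad
    obtain ⟨c₀, hc₀⟩ := exists_taylor_eq_add_C_of_not_essDistinct hq hq' h₀
    refine ⟨(a₀ - b₀).natAbs + 1, fun a b hab => by_contra fun h => ?_⟩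
    obtain ⟨c, hc⟩ := exists_taylor_eq_add_C_of_not_essDistinct hq hq' h
    have : a - b = a₀ - b₀ := by exact_mod_cast eq_of_taylor_eq_add_C hdeg hc hc₀
    rw [this] at hab
    push_cast at hab
    linarith
  · simp only [not_exists, not_not] at hbad
    exact ⟨0, fun a b _ => hbad a b⟩

end IntegralPolynomial

theorem lemma61_general (p : Fin 2 → ℤ → ℤ)
    (hdeg : ∀ i, PolyDegGe (p i) 2) (hdist : EssDistinct (p 0) (p 1)) :
    ∃ L : ℕ, 0 < L ∧ ∀ k : Fin 2 → ℤ, (L : ℤ) ≤ |k 0 - k 1| →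
      ∀ i₁ j₁ i₂ j₂ : Fin 2, (i₁, j₁) ≠ (i₂, j₂) →
        EssDistinct (fun n : ℤ => p i₁ (n + k j₁) - p i₁ (k j₁))
          (fun n : ℤ => p i₂ (n + k j₂) - p i₂ (k j₂)) := by
  choose q hq hqdeg using hdeg
  choose B hB using fun i i' => exists_essDistinct_of_le_abs_sub (hq i) (hq i') (hqdeg i)
  refine ⟨∑ ii : Fin 2 × Fin 2, B ii.1 ii.2 + 1, Nat.succ_pos _, fun k hk i₁ j₁ i₂ j₂ hne => ?_⟩
  by_cases hj : j₁ = j₂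
  · subst hj
    have hi : i₁ ≠ i₂ := fun h => hne (by rw [h])
    refine EssDistinct.normalizedShift ?_ (k j₁)
    fin_cases i₁ <;> fin_cases i₂ <;> first | exact absurd rfl hi | exact hdist | exact hdist.symm
  · have hB_le : B i₁ i₂ ≤ ∑ ii : Fin 2 × Fin 2, B ii.1 ii.2 :=
      Finset.single_le_sum (f := fun ii => B ii.1 ii.2) (fun _ _ => Nat.zero_le _)
        (Finset.mem_univ (i₁, i₂))
    have habs : |k j₁ - k j₂| = |k 0 - k 1| := by
      fin_cases j₁ <;> fin_cases j₂ <;> simp_all [abs_sub_comm]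
    refine hB i₁ i₂ _ _ ?_
    omega

/-- Lemma 6.1: here the two polynomials are `p 0` and `p 1`, and
`k 0`, `k 1` play the role of `k₁, k₂`. -/
theorem lemma61 (p : Fin 2 → ℤ → ℤ) (hpoly : ∀ i, IsIntPoly (p i))
    (hdeg : ∀ i, PolyDegGe (p i) 2) (hdist : EssDistinct (p 0) (p 1)) :
    ∃ L : ℕ, 0 < L ∧ ∀ k : Fin 2 → ℤ, (L : ℤ) ≤ |k 0 - k 1| →
      ∀ i₁ j₁ i₂ j₂ : Fin 2, (i₁, j₁) ≠ (i₂, j₂) →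
        EssDistinct (fun n : ℤ => p i₁ (n + k j₁) - p i₁ (k j₁))
          (fun n : ℤ => p i₂ (n + k j₂) - p i₂ (k j₂)) :=
  lemma61_general p hdeg hdist
end

section
/- Lemma 6.2: Let A ⊆ ℤ² be piecewise syndetic and let B ⊆ ℤ². If for every M ∈ ℕ there exists n_M ∈ ℤ² such that n_M + (A ∩ [−M,M]²) ⊆ B, then B is piecewise syndetic in ℤ². -/
/-!
A thickness witness for `⋃_{g ∈ F} (A - g)` on a finite set `E` only involves the finitely many
points `g₀ + f + g` (`f ∈ E`, `g ∈ F`) of `A`. These lie in a box `[-M, M]²`, and the translate of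
`A ∩ [-M, M]²` into `B` carries the same witness over to `⋃_{g ∈ F} (B - g)`, with the same `F`.
-/

open Classical in
theorem PiecewiseSyndeticZ2.of_forall_finset_translate {A B : Set (ℤ × ℤ)}
    (hA : PiecewiseSyndeticZ2 A)
    (h : ∀ K : Finset (ℤ × ℤ), ↑K ⊆ A → ∃ n : ℤ × ℤ, ∀ v ∈ K, n + v ∈ B) :
    PiecewiseSyndeticZ2 B := by
  obtain ⟨F, hF⟩ := hA
  refine ⟨F, fun E => ?_⟩
  obtain ⟨g₀, hg₀⟩ := hF E
  let K := ((E ×ˢ F).image fun p => g₀ + p.1 + p.2).filter (· ∈ A)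
  obtain ⟨n, hn⟩ := h K fun v hv => (Finset.mem_filter.1 hv).2
  refine ⟨n + g₀, fun f hf => ?_⟩
  obtain ⟨g, hgF, hgA⟩ := hg₀ f hf
  have hK : g₀ + f + g ∈ K :=
    Finset.mem_filter.2 ⟨Finset.mem_image.2 ⟨(f, g), Finset.mem_product.2 ⟨hf, hgF⟩, rfl⟩, hgA⟩
  refine ⟨g, hgF, ?_⟩
  simpa only [add_assoc] using hn _ hK

theorem Finset.exists_subset_Icc_sq (K : Finset (ℤ × ℤ)) :
    ∃ M : ℕ, ∀ v ∈ K,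
      v.1 ∈ Set.Icc (-(M : ℤ)) (M : ℤ) ∧ v.2 ∈ Set.Icc (-(M : ℤ)) (M : ℤ) := by
  refine ⟨K.sup fun v => v.1.natAbs ⊔ v.2.natAbs, fun v hv => ?_⟩
  have hle := Finset.le_sup (f := fun v : ℤ × ℤ => v.1.natAbs ⊔ v.2.natAbs) hv
  simp only [Set.mem_Icc]
  omega

/-- Lemma 6.2 -/
theorem lemma62 (A B : Set (ℤ × ℤ)) (hA : PiecewiseSyndeticZ2 A)
    (h : ∀ M : ℕ, ∃ nM : ℤ × ℤ, ∀ v ∈ A,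
      v.1 ∈ Set.Icc (-(M : ℤ)) (M : ℤ) → v.2 ∈ Set.Icc (-(M : ℤ)) (M : ℤ) →
        nM + v ∈ B) :
    PiecewiseSyndeticZ2 B := by
  refine hA.of_forall_finset_translate fun K hK => ?_
  obtain ⟨M, hM⟩ := K.exists_subset_Icc_sq
  obtain ⟨n, hn⟩ := h M
  exact ⟨n, fun v hv => hn v (hK hv) (hM v hv).1 (hM v hv).2⟩
end

section
/- Lemma 6.5: Let E be a syndetic subset of ℤ². Then there exists m* ∈ ℤ such that the section E(m*) = {n ∈ ℤ : (m*, n) ∈ E} is piecewise syndetic in ℤ. -/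
/-- A subset `E` of ℤ² is syndetic if finitely many translates of `E` cover ℤ². -/
def SyndeticZ2 (E : Set (ℤ × ℤ)) : Prop :=
  ∃ K : Finset (ℤ × ℤ), ∀ x : ℤ × ℤ, ∃ g ∈ K, x + g ∈ E

/-!
Restricting the covering `⋃_{g ∈ K} (E - g) = ℤ²` to the column `{0} × ℤ` writes `ℤ` as a finite
union of translates of sections of `E`. Piecewise syndeticity is partition regular, so one of these
translates, hence the corresponding section, is piecewise syndetic.
-/

theorem not_piecewiseSyndeticZ_empty : ¬ PiecewiseSyndeticZ ∅ := fun ⟨_, hN⟩ =>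
  let ⟨_, ha⟩ := hN 0
  let ⟨_, _, _, h⟩ := ha 0 le_rfl
  h

theorem piecewiseSyndeticZ_univ : PiecewiseSyndeticZ Set.univ :=
  ⟨1, fun _ => ⟨0, fun _ _ => ⟨1, le_rfl, le_rfl, trivial⟩⟩⟩

theorem PiecewiseSyndeticZ.of_add_right {T : Set ℤ} (t : ℤ)
    (h : PiecewiseSyndeticZ {n | n + t ∈ T}) : PiecewiseSyndeticZ T := by
  obtain ⟨N, hN⟩ := h
  refine ⟨N, fun L => ?_⟩
  obtain ⟨a, ha⟩ := hN L
  refine ⟨a + t, fun k hk => ?_⟩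
  obtain ⟨i, hi1, hiN, hi⟩ := ha k hk
  replace hi : a + k + i + t ∈ T := hi
  exact ⟨i, hi1, hiN, by convert hi using 1; ring⟩

theorem PiecewiseSyndeticZ.or_of_union {A B : Set ℤ} (h : PiecewiseSyndeticZ (A ∪ B)) :
    PiecewiseSyndeticZ A ∨ PiecewiseSyndeticZ B := by
  obtain ⟨N, hN⟩ := h
  refine or_iff_not_imp_left.2 fun hA => ⟨N, fun L => ?_⟩
  -- Since `A` is not piecewise syndetic with gap `L + N + 1`, every long enough interval contains a
  -- run of `L + N + 1` points missing `A`; inside an interval covered by `A ∪ B` with gap `N`,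
  -- the first `L + 1` points of that run are covered by `B` alone.
  obtain ⟨L₀, hL₀⟩ : ∃ L₀ : ℕ, ∀ a : ℤ, ∃ k ≤ L₀,
      ∀ i : ℕ, 1 ≤ i → i ≤ L + N + 1 → a + k + i ∉ A := by
    have := fun h => hA ⟨L + N + 1, h⟩
    simpa [ThickZ] using this
  obtain ⟨a, ha⟩ := hN (L₀ + (L + N + 1))
  obtain ⟨k, hk, hgap⟩ := hL₀ a
  refine ⟨a + k + 1, fun j hj => ?_⟩
  obtain ⟨i, hi1, hiN, hi⟩ := ha (k + 1 + j) (by omega)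
  have hx : a + ((k + 1 + j : ℕ) : ℤ) + i = a + k + ((1 + j + i : ℕ) : ℤ) := by push_cast; ring
  rw [hx] at hi
  refine ⟨i, hi1, hiN, ?_⟩
  convert hi.resolve_left (hgap _ (by omega) (by omega)) using 1
  push_cast; ring

theorem PiecewiseSyndeticZ.exists_of_biUnion {ι : Type*} {s : Finset ι} {f : ι → Set ℤ}
    (h : PiecewiseSyndeticZ (⋃ i ∈ s, f i)) : ∃ i ∈ s, PiecewiseSyndeticZ (f i) := by
  classical
  induction s using Finset.induction_on with
  | empty => simp [not_piecewiseSyndeticZ_empty] at h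
  | insert i s _ ih =>
    rw [Finset.set_biUnion_insert] at h
    rcases h.or_of_union with hi | hs
    · exact ⟨i, Finset.mem_insert_self i s, hi⟩
    · obtain ⟨j, hj, hpj⟩ := ih hs
      exact ⟨j, Finset.mem_insert_of_mem hj, hpj⟩

/-- Lemma 6.5 -/
theorem lemma65 (E : Set (ℤ × ℤ)) (hE : SyndeticZ2 E) :
    ∃ m : ℤ, PiecewiseSyndeticZ {n : ℤ | (m, n) ∈ E} := by
  obtain ⟨K, hK⟩ := hE
  have hcover : (⋃ g ∈ K, {n : ℤ | (g.1, n + g.2) ∈ E}) = Set.univ := by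
    refine Set.eq_univ_of_forall fun n => ?_
    obtain ⟨g, hg, hmem⟩ := hK (0, n)
    rw [show ((0 : ℤ), n) + g = (g.1, n + g.2) from Prod.ext (zero_add _) rfl] at hmem
    exact Set.mem_biUnion hg hmem
  obtain ⟨g, -, hg⟩ := PiecewiseSyndeticZ.exists_of_biUnion (hcover ▸ piecewiseSyndeticZ_univ)
  exact ⟨g.1, hg.of_add_right (T := {n | (g.1, n) ∈ E}) g.2⟩
end
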